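/- In the setting of the slope factorization of shuffle algebras (pairings, coproducts, and projections as above), every E ∈ S^≥ satisfies E = [E₁]_{<p} · [E₂]_{≥p}, where Δ(E) = E₁ ⊗ E₂ is Sweedler notation for the coproduct, [·]_{<p} projects to S⁺_{(-∞,p)} and [·]_{≥p} projects to S⁺_{[p,∞]} (defined via the perfect pairings with S⁻_{(-∞,p)} and S⁻_{[p,∞]} respectively). -/

import Mathlib

/-!
Pair both sides with a product `f * f'`, `f ∈ B₁`, `f' ∈ B₂`. The bialgebra axiom turns
`⟨E, f f'⟩` into `⟨E₁, f⟩⟨E₂, f'⟩`; since the projections preserve the pairing with their own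
slope piece and the pairing factorizes along `A₁ · A₂` and `B₁ · B₂`, this is also
`⟨[E₁]_{<p} [E₂]_{≥p}, f f'⟩`. Such products span `B`, so nondegeneracy gives the equality.
-/

open TensorProduct

noncomputable def pair2 {K A B : Type*} [CommRing K] [AddCommGroup A] [Module K A]
    [AddCommGroup B] [Module K B] (p : A →ₗ[K] Module.Dual K B) :
    A ⊗[K] A →ₗ[K] Module.Dual K (B ⊗[K] B) :=
  (TensorProduct.dualDistrib K B B) ∘ₗ (TensorProduct.map p p)

theorem pair2_tmul_tmul {K A B : Type*} [CommRing K] [AddCommGroup A] [Module K A]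
    [AddCommGroup B] [Module K B] (p : A →ₗ[K] Module.Dual K B) (a a' : A) (b b' : B) :
    pair2 p (a ⊗ₜ a') (b ⊗ₜ b') = p a b * p a' b' :=
  rfl

theorem pair_mul'_map_eq_pair2 {K A B : Type*} [CommRing K] [Ring A] [Ring B]
    [Algebra K A] [Algebra K B] (p : A →ₗ[K] Module.Dual K B)
    {A1 A2 : Subalgebra K A} {B1 B2 : Subalgebra K B}
    (hfact : ∀ e' ∈ A1, ∀ e ∈ A2, ∀ f ∈ B1, ∀ f' ∈ B2,
      p (e' * e) (f * f') = p e' f * p e f')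
    {πlt πgeq : A →ₗ[K] A} (hltmem : ∀ x, πlt x ∈ A1)
    (hltpair : ∀ x, ∀ f ∈ B1, p (πlt x) f = p x f)
    (hgeqmem : ∀ x, πgeq x ∈ A2) (hgeqpair : ∀ x, ∀ f' ∈ B2, p (πgeq x) f' = p x f')
    {f f' : B} (hf : f ∈ B1) (hf' : f' ∈ B2) (t : A ⊗[K] A) :
    p (LinearMap.mul' K A (map πlt πgeq t)) (f * f') = pair2 p t (f ⊗ₜ f') := by
  induction t using TensorProduct.induction_on with
  | zero => simp
  | tmul x y =>
    rw [map_tmul, LinearMap.mul'_apply, hfact _ (hltmem x) _ (hgeqmem y) f hf f' hf',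
      hltpair x f hf, hgeqpair y f' hf', pair2_tmul_tmul]
  | add x y hx hy => simp only [map_add, LinearMap.add_apply, hx, hy]

theorem factorization_E_lt_geq
    {K A B : Type*} [Field K] [Ring A] [Ring B]
    [Bialgebra K A] [Bialgebra K B]
    (p : A →ₗ[K] Module.Dual K B)
    -- bialgebra pairing axiom: ⟨a, b'b''⟩ = ⟨a₁,b'⟩⟨a₂,b''⟩
    (hpair1 : ∀ (a : A) (b b' : B),
      p a (b * b') = pair2 p (Coalgebra.comul (R := K) a) (b ⊗ₜ[K] b'))
    -- slope subalgebras
    (A1 A2 : Subalgebra K A) (B1 B2 : Subalgebra K B)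
    -- the pairing factorizes along the slope decompositions
    (hfact : ∀ e' ∈ A1, ∀ e ∈ A2, ∀ f ∈ B1, ∀ f' ∈ B2,
      p (e' * e) (f * f') = p e' f * p e f')
    -- non-degeneracy of the full pairing
    (hnondeg : ∀ a : A, (∀ b : B, p a b = 0) → a = 0)
    -- B = B₁ · B₂ : every element of B is a sum of products f·f'
    (hBspan : Submodule.span K {b : B | ∃ f ∈ B1, ∃ f' ∈ B2, b = f * f'} = ⊤)
    -- the projection [·]_{<p} : S^≥ → S⁺_{(-∞,p)}, defined via the perfect pairing with B₁
    (πlt : A →ₗ[K] A)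
    (hltmem : ∀ x : A, πlt x ∈ A1)
    (hltpair : ∀ x : A, ∀ f ∈ B1, p (πlt x) f = p x f)
    -- the projection [·]_{≥p} : S^≥ → S⁺_{[p,∞]}, defined via the perfect pairing with B₂
    (πgeq : A →ₗ[K] A)
    (hgeqmem : ∀ x : A, πgeq x ∈ A2)
    (hgeqpair : ∀ x : A, ∀ f' ∈ B2, p (πgeq x) f' = p x f') :
    ∀ E : A,
      (LinearMap.mul' K A) (TensorProduct.map πlt πgeq (Coalgebra.comul (R := K) E)) = E := by
  intro E
  have hprod : Set.EqOn (p (LinearMap.mul' K A (map πlt πgeq (Coalgebra.comul (R := K) E))))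
      (p E) {b : B | ∃ f ∈ B1, ∃ f' ∈ B2, b = f * f'} := by
    rintro _ ⟨f, hf, f', hf', rfl⟩
    rw [pair_mul'_map_eq_pair2 p hfact hltmem hltpair hgeqmem hgeqpair hf hf', ← hpair1]
  have hinj : Function.Injective p :=
    (injective_iff_map_eq_zero p).2 fun a ha => hnondeg a fun b => by rw [ha]; rfl
  exact hinj (LinearMap.ext_on hBspan hprod)
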